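/- Let p > 0 and m_p the mean residual life function of the p-singular Cantor-type distribution. Then m_p(1/3) = (5p+4)/(6(2p+1)). -/

import Mathlib

open MeasureTheory Set Filter

/-- The CDF of the p-singular Cantor-type distribution: the monotone increasing
function on [0,1] with F(x/3) = F(x)/(p+1) for x ∈ [0,1] and
F(1-x) = 1 - p·F(x) for x ∈ [0,1/3]. -/
def IsCantorCDFp (p : ℝ) (F : ℝ → ℝ) : Prop :=
  Monotone F ∧
    (∀ x ∈ Set.Icc (0:ℝ) 1, F (x/3) = F x / (p+1)) ∧
    (∀ x ∈ Set.Icc (0:ℝ) (1/3), F (1-x) = 1 - p * F x)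

/-- The mean residual life function of a distribution with CDF F supported on [0,1]:
m(x) = (1/(1-F(x))) ∫_x^1 (1-F(u)) du  (equal to 0 at x = 1 by convention). -/
noncomputable def mrl (F : ℝ → ℝ) (x : ℝ) : ℝ :=
  (∫ u in x..(1:ℝ), (1 - F u)) / (1 - F x)

/-!
Integrate the two functional equations. Self-similarity gives `∫₀^{1/3} F = I / (3(p+1))`
for `I = ∫₀¹ F`, the symmetry gives `∫_{2/3}^1 F = 1/3 - p ∫₀^{1/3} F`, and monotonicity forces
`F = 1/(p+1)` on the middle third. Adding the three pieces yields a linear equation for `I`,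
whence `I = (p+2)/(4p+2)`, and then `∫_{1/3}^1 (1 - F)` and `1 - F(1/3) = p/(p+1)` are explicit.
-/

namespace IsCantorCDFp

variable {p : ℝ} {F : ℝ → ℝ}

theorem apply_zero (hF : IsCantorCDFp p F) (hp : p ≠ 0) : F 0 = 0 := by
  have h := hF.2.1 0 ⟨le_rfl, zero_le_one⟩
  rw [zero_div] at h
  by_cases hp1 : p + 1 = 0
  · simpa [hp1] using h
  · field_simp at h
    exact (mul_eq_zero.mp (by linear_combination h : F 0 * p = 0)).resolve_right hp

theorem apply_one (hF : IsCantorCDFp p F) (hp : p ≠ 0) : F 1 = 1 := by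
  simpa [hF.apply_zero hp] using hF.2.2 0 ⟨le_rfl, by norm_num⟩

theorem apply_third (hF : IsCantorCDFp p F) (hp : p ≠ 0) : F (1 / 3) = 1 / (p + 1) := by
  simpa [hF.apply_one hp] using hF.2.1 1 ⟨zero_le_one, le_rfl⟩

theorem apply_two_thirds (hF : IsCantorCDFp p F) (hp : 0 < p) : F (2 / 3) = 1 / (p + 1) := by
  have h := hF.2.2 (1 / 3) ⟨by norm_num, le_rfl⟩
  rw [show (1 : ℝ) - 1 / 3 = 2 / 3 by norm_num, hF.apply_third hp.ne'] at h
  rw [h]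
  field_simp
  ring

theorem eqOn_middle_third (hF : IsCantorCDFp p F) (hp : 0 < p) :
    EqOn F (fun _ ↦ 1 / (p + 1)) (Icc (1 / 3) (2 / 3)) := fun _ hx ↦
  le_antisymm (hF.apply_two_thirds hp ▸ hF.1 hx.2) (hF.apply_third hp.ne' ▸ hF.1 hx.1)

theorem intervalIntegrable (hF : IsCantorCDFp p F) (a b : ℝ) :
    IntervalIntegrable F volume a b :=
  hF.1.intervalIntegrable

theorem integral_zero_third (hF : IsCantorCDFp p F) :
    ∫ u in (0 : ℝ)..1 / 3, F u = (∫ u in (0 : ℝ)..1, F u) / (3 * (p + 1)) := by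
  have h := intervalIntegral.integral_comp_div (a := 0) (b := 1) F (by norm_num : (3 : ℝ) ≠ 0)
  rw [zero_div, smul_eq_mul, intervalIntegral.integral_congr
    (fun x hx ↦ hF.2.1 x (uIcc_of_le (zero_le_one' ℝ) ▸ hx)),
    intervalIntegral.integral_div] at h
  rw [mul_comm (3 : ℝ), ← div_div, h]
  ring

theorem integral_third_two_thirds (hF : IsCantorCDFp p F) (hp : 0 < p) :
    ∫ u in (1 / 3 : ℝ)..2 / 3, F u = 1 / (3 * (p + 1)) := by
  have hle : (1 / 3 : ℝ) ≤ 2 / 3 := by norm_num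
  rw [intervalIntegral.integral_congr (fun x hx ↦ hF.eqOn_middle_third hp (uIcc_of_le hle ▸ hx)),
    intervalIntegral.integral_const, smul_eq_mul]
  field_simp
  norm_num

theorem integral_two_thirds_one (hF : IsCantorCDFp p F) :
    ∫ u in (2 / 3 : ℝ)..1, F u = 1 / 3 - p * ∫ u in (0 : ℝ)..1 / 3, F u := by
  have h := intervalIntegral.integral_comp_sub_left (a := 0) (b := 1 / 3) F 1
  rw [show (1 : ℝ) - 1 / 3 = 2 / 3 by norm_num, sub_zero, intervalIntegral.integral_congr
    (fun x hx ↦ hF.2.2 x (uIcc_of_le (by norm_num : (0 : ℝ) ≤ 1 / 3) ▸ hx)),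
    intervalIntegral.integral_sub intervalIntegrable_const
      ((hF.intervalIntegrable _ _).const_mul p),
    intervalIntegral.integral_const, intervalIntegral.integral_const_mul] at h
  rw [← h]
  norm_num

theorem integral_third_one (hF : IsCantorCDFp p F) (hp : 0 < p) :
    ∫ u in (1 / 3 : ℝ)..1, F u =
      1 / (3 * (p + 1)) + (1 / 3 - p * ∫ u in (0 : ℝ)..1 / 3, F u) := by
  rw [← intervalIntegral.integral_add_adjacent_intervals (hF.intervalIntegrable _ (2 / 3))
    (hF.intervalIntegrable _ _), hF.integral_third_two_thirds hp, hF.integral_two_thirds_one]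

theorem integral_zero_one (hF : IsCantorCDFp p F) (hp : 0 < p) :
    ∫ u in (0 : ℝ)..1, F u = (p + 2) / (4 * p + 2) := by
  have hsplit := intervalIntegral.integral_add_adjacent_intervals
    (hF.intervalIntegrable 0 (1 / 3)) (hF.intervalIntegrable _ 1)
  rw [hF.integral_third_one hp, hF.integral_zero_third] at hsplit
  set I := ∫ u in (0 : ℝ)..1, F u
  have : 0 < 4 * p + 2 := by linarith
  field_simp at hsplit ⊢
  linear_combination -hsplit

theorem integral_one_sub_third_one (hF : IsCantorCDFp p F) (hp : 0 < p) :
    ∫ u in (1 / 3 : ℝ)..1, (1 - F u) = p * (5 * p + 4) / (6 * (p + 1) * (2 * p + 1)) := by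
  rw [intervalIntegral.integral_sub intervalIntegrable_const (hF.intervalIntegrable _ _),
    intervalIntegral.integral_const, hF.integral_third_one hp, hF.integral_zero_third,
    hF.integral_zero_one hp, smul_eq_mul]
  have : 0 < 2 * p + 1 := by linarith
  field_simp
  ring

end IsCantorCDFp

/-- For the p-singular Cantor-type distribution, m_p(1/3) = (5p+4)/(6(2p+1)). -/
theorem cantorp_mrl_at_third (p : ℝ) (hp : 0 < p) (F : ℝ → ℝ) (hF : IsCantorCDFp p F) :
    mrl F (1/3) = (5 * p + 4) / (6 * (2 * p + 1)) := by
  have : 0 < 2 * p + 1 := by linarith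
  rw [mrl, hF.integral_one_sub_third_one hp, hF.apply_third hp.ne',
    one_sub_div (by positivity), add_sub_cancel_right]
  field_simp
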